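/- An irrational x ∈ [0,1] is very well approximable (there is c > 0 such that infinitely many rationals p/q satisfy |x − p/q| ≤ q^{−(2+c)}, with the right-hand side sharp up to arbitrary small multiplicative constants, i.e. x is q^{−(2+c)}-well approximable) if and only if there exists c > 0 such that log(1 + ω_n) ≥ c ∑_{j=0}^{n−1} log(1 + ω_j) for infinitely many n, where ω_j are the partial quotients of x. -/

import Mathlib

open Real Set

/-- The Gauss map. -/
noncomputable def gaussMap (x : ℝ) : ℝ := if x = 0 then 0 else 1 / x - ⌊1 / x⌋

/-- The n-th partial quotient of x. -/
noncomputable def cfOmega (x : ℝ) (n : ℕ) : ℕ := (⌊1 / (gaussMap^[n] x)⌋).toNat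

/-- (q_{n-1}, q_n) for the convergent denominators of x, with q_{-1} = 0, q_0 = 1. -/
noncomputable def cfQPair (x : ℝ) : ℕ → ℕ × ℕ
  | 0 => (0, 1)
  | n + 1 => ((cfQPair x n).2, cfOmega x n * (cfQPair x n).2 + (cfQPair x n).1)

/-- The denominator q_n of the n-th convergent of x. -/
noncomputable def cfQ (x : ℝ) (n : ℕ) : ℕ := (cfQPair x n).2

/-- (p_{n-1}, p_n) for the convergent numerators of x, with p_{-1} = 1, p_0 = 0. -/
noncomputable def cfPPair (x : ℝ) : ℕ → ℕ × ℕ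
  | 0 => (1, 0)
  | n + 1 => ((cfPPair x n).2, cfOmega x n * (cfPPair x n).2 + (cfPPair x n).1)

/-- The numerator p_n of the n-th convergent of x. -/
noncomputable def cfP (x : ℝ) (n : ℕ) : ℕ := (cfPPair x n).2

open GenContFract Filter

/-!
The partial quotient ω_n measures the quality of the n-th convergent p_n/q_n: the next
convergent is 1/(q_n q_{n+1}) away from it and much closer to x, so |x - p_n/q_n| lies within a
factor 2 of 1/((1 + ω_n) q_n²). By Legendre's theorem every r with |x - r| < 1/(2 den(r)²) is a
convergent, so x is q^{-(2+c)}-well approximable (up to a change of c) exactly when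
q_n^c ≲ 1 + ω_n for infinitely many n. Finally q_n ≤ ∏_{j<n} (1 + ω_j) ≤ 2 q_n³, so log q_n is
comparable to ∑_{j<n} log (1 + ω_j).
-/

section

variable {x : ℝ} {n : ℕ}

@[simp] lemma cfQ_zero : cfQ x 0 = 1 := rfl
@[simp] lemma cfQ_one : cfQ x 1 = cfOmega x 0 := by simp [cfQ, cfQPair]
lemma cfQ_add_two : cfQ x (n + 2) = cfOmega x (n + 1) * cfQ x (n + 1) + cfQ x n := rfl
@[simp] lemma cfP_zero : cfP x 0 = 0 := rfl
@[simp] lemma cfP_one : cfP x 1 = 1 := by simp [cfP, cfPPair]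
lemma cfP_add_two : cfP x (n + 2) = cfOmega x (n + 1) * cfP x (n + 1) + cfP x n := rfl

lemma cfP_mul_cfQ_succ_sub (x : ℝ) (n : ℕ) :
    (cfP x n : ℤ) * cfQ x (n + 1) - cfP x (n + 1) * cfQ x n = (-1) ^ (n + 1) := by
  induction n with
  | zero => simp
  | succ n ih =>
    rw [cfP_add_two, cfQ_add_two, pow_succ, ← ih]
    push_cast
    ring

lemma coprime_cfP_cfQ (x : ℝ) (n : ℕ) : Nat.Coprime (cfP x n) (cfQ x n) := by
  rw [← Nat.isCoprime_iff_coprime]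
  refine ⟨(-1) ^ (n + 1) * cfQ x (n + 1), -(-1) ^ (n + 1) * cfP x (n + 1), ?_⟩
  have hsq : ((-1 : ℤ) ^ (n + 1)) ^ 2 = 1 := by
    rw [← pow_mul]; exact Even.neg_one_pow ⟨n + 1, by ring⟩
  linear_combination (-1) ^ (n + 1) * cfP_mul_cfQ_succ_sub x n + hsq

lemma cfOmega_mul_cfQ_le (n : ℕ) : cfOmega x n * cfQ x n ≤ cfQ x (n + 1) := by
  cases n with
  | zero => simp
  | succ n => rw [cfQ_add_two]; omega

section PositivePartialQuotients

variable (hω : ∀ n, 1 ≤ cfOmega x n)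
include hω

lemma cfQ_le_cfQ_succ (n : ℕ) : cfQ x n ≤ cfQ x (n + 1) :=
  le_trans (Nat.le_mul_of_pos_left _ (hω n)) (cfOmega_mul_cfQ_le n)

lemma monotone_cfQ : Monotone (cfQ x) := monotone_nat_of_le_succ (cfQ_le_cfQ_succ hω)

lemma cfQ_pos (n : ℕ) : 0 < cfQ x n := monotone_cfQ hω (Nat.zero_le n)

lemma cfQ_succ_le (n : ℕ) : cfQ x (n + 1) ≤ (1 + cfOmega x n) * cfQ x n := by
  cases n with
  | zero => simp
  | succ n => rw [cfQ_add_two]; nlinarith [cfQ_le_cfQ_succ hω n]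

lemma cfQ_add_cfQ_succ_le (n : ℕ) : cfQ x n + cfQ x (n + 1) ≤ cfQ x (n + 2) := by
  rw [cfQ_add_two]; nlinarith [hω (n + 1)]

lemma le_cfQ (n : ℕ) : n ≤ cfQ x n := by
  induction n using Nat.twoStepInduction with
  | zero => simp
  | one => simpa using hω 0
  | more n _ ih => have := cfQ_pos hω n; have := cfQ_add_cfQ_succ_le hω n; omega

lemma two_pow_le_two_mul_cfQ_sq (n : ℕ) : 2 ^ n ≤ 2 * cfQ x n ^ 2 := by
  induction n using Nat.twoStepInduction with
  | zero => simp
  | one => simpa using Nat.one_le_pow 2 _ (hω 0)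
  | more n ih _ =>
    have := cfQ_add_cfQ_succ_le hω n
    have := cfQ_le_cfQ_succ hω n
    rw [pow_add]
    nlinarith

lemma cfQ_le_prod (n : ℕ) : cfQ x n ≤ ∏ j ∈ Finset.range n, (1 + cfOmega x j) := by
  induction n with
  | zero => simp
  | succ n ih =>
    rw [Finset.prod_range_succ]
    calc cfQ x (n + 1) ≤ (1 + cfOmega x n) * cfQ x n := cfQ_succ_le hω n
      _ ≤ _ := by rw [mul_comm]; gcongr

lemma prod_le_two_pow_mul_cfQ (n : ℕ) :
    ∏ j ∈ Finset.range n, (1 + cfOmega x j) ≤ 2 ^ n * cfQ x n := by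
  induction n with
  | zero => simp
  | succ n ih =>
    have h2 : (1 + cfOmega x n) * cfQ x n ≤ 2 * cfQ x (n + 1) := by
      nlinarith [cfOmega_mul_cfQ_le (x := x) n, hω n]
    calc ∏ j ∈ Finset.range (n + 1), (1 + cfOmega x j)
        ≤ 2 ^ n * cfQ x n * (1 + cfOmega x n) := by rw [Finset.prod_range_succ]; gcongr
      _ ≤ 2 ^ n * (2 * cfQ x (n + 1)) := by rw [mul_assoc, mul_comm (cfQ x n)]; gcongr
      _ = 2 ^ (n + 1) * cfQ x (n + 1) := by ring

lemma log_cfQ_le_sum_log (n : ℕ) :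
    Real.log (cfQ x n) ≤ ∑ j ∈ Finset.range n, Real.log (1 + (cfOmega x j : ℝ)) := by
  rw [← Real.log_prod (fun j _ => by positivity)]
  apply Real.log_le_log (by exact_mod_cast cfQ_pos hω n)
  exact_mod_cast cfQ_le_prod hω n

lemma sum_log_le_three_mul_log_cfQ_add_log_two (n : ℕ) :
    ∑ j ∈ Finset.range n, Real.log (1 + (cfOmega x j : ℝ))
      ≤ 3 * Real.log (cfQ x n) + Real.log 2 := by
  have hq := cfQ_pos hω n
  have hprod : ∏ j ∈ Finset.range n, (1 + cfOmega x j) ≤ 2 * cfQ x n ^ 3 := by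
    nlinarith [prod_le_two_pow_mul_cfQ hω n, two_pow_le_two_mul_cfQ_sq hω n]
  calc ∑ j ∈ Finset.range n, Real.log (1 + (cfOmega x j : ℝ))
      = Real.log (∏ j ∈ Finset.range n, (1 + (cfOmega x j : ℝ))) :=
        (Real.log_prod fun j _ => by positivity).symm
    _ ≤ Real.log (2 * (cfQ x n : ℝ) ^ 3) :=
        Real.log_le_log (Finset.prod_pos fun j _ => by positivity) (by exact_mod_cast hprod)
    _ = 3 * Real.log (cfQ x n) + Real.log 2 := by
        rw [Real.log_mul (by norm_num) (by positivity), Real.log_pow]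
        push_cast
        ring

lemma mul_sum_log_le_of_cfQ_rpow_le {c : ℝ} (hc : 0 ≤ c) {n : ℕ}
    (h : (cfQ x n : ℝ) ^ c ≤ 2 * (1 + cfOmega x n)) :
    c / (c + 6) * ∑ j ∈ Finset.range n, Real.log (1 + (cfOmega x j : ℝ))
      ≤ Real.log (1 + cfOmega x n) := by
  have hq : (0 : ℝ) < cfQ x n := by exact_mod_cast cfQ_pos hω n
  have hωn : (1 : ℝ) ≤ cfOmega x n := by exact_mod_cast hω n
  have hlog2 : Real.log 2 ≤ Real.log (1 + cfOmega x n) :=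
    Real.log_le_log (by norm_num) (by linarith)
  rw [Real.rpow_le_iff_le_log hq (by positivity), Real.log_mul (by norm_num) (by positivity)] at h
  have hsum := sum_log_le_three_mul_log_cfQ_add_log_two hω n
  -- c log q_n ≤ 2 log (1 + ω_n) and ∑ ≤ 3 log q_n + log (1 + ω_n),
  -- so c ∑ ≤ (c + 6) log (1 + ω_n).
  rw [div_mul_eq_mul_div, div_le_iff₀ (by positivity)]
  nlinarith

lemma cfQ_rpow_le_of_mul_sum_log_le {c : ℝ} (hc : 0 ≤ c) {n : ℕ}
    (h : c * ∑ j ∈ Finset.range n, Real.log (1 + (cfOmega x j : ℝ))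
      ≤ Real.log (1 + cfOmega x n)) :
    (cfQ x n : ℝ) ^ c ≤ 1 + cfOmega x n := by
  have hq : (0 : ℝ) < cfQ x n := by exact_mod_cast cfQ_pos hω n
  rw [Real.rpow_le_iff_le_log hq (by positivity)]
  nlinarith [log_cfQ_le_sum_log hω n]

end PositivePartialQuotients

end

lemma gaussMap_eq_fract_inv (y : ℝ) : gaussMap y = Int.fract y⁻¹ := by
  unfold gaussMap
  split_ifs with hy
  · simp [hy]
  · rw [one_div, Int.fract]

lemma gaussMap_nonneg (y : ℝ) : 0 ≤ gaussMap y := by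
  rw [gaussMap_eq_fract_inv]; exact Int.fract_nonneg _

lemma Irrational.gaussMap_iterate {y : ℝ} (h : Irrational y) (n : ℕ) :
    Irrational (gaussMap^[n] y) := by
  induction n with
  | zero => exact h
  | succ n ih =>
    rw [Function.iterate_succ_apply', gaussMap_eq_fract_inv, Int.fract]
    exact ih.inv.sub_intCast _

lemma gaussMap_iterate_nonneg {y : ℝ} (hy : 0 ≤ y) (n : ℕ) : 0 ≤ gaussMap^[n] y := by
  cases n with
  | zero => exact hy
  | succ n => rw [Function.iterate_succ_apply']; exact gaussMap_nonneg _

lemma rpow_neg_two_add {q : ℝ} (hq : 0 < q) (c : ℝ) :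
    q ^ (-(2 + c)) = (q ^ 2 * q ^ c)⁻¹ := by
  rw [Real.rpow_neg hq.le, Real.rpow_add hq, Real.rpow_two]

lemma finite_setOf_den_le_abs_sub_le (x B : ℝ) (D : ℕ) :
    {r : ℚ | r.den ≤ D ∧ |x - r| ≤ B}.Finite := by
  set N := ⌈(|x| + B) * D⌉
  refine Set.Finite.of_finite_image (f := fun r : ℚ => (r.num, r.den))
    (((Set.finite_Icc (-N) N).prod (Set.finite_Iic D)).subset ?_)
    (fun r _ s _ h => Rat.ext (congrArg Prod.fst h) (congrArg Prod.snd h))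
  rintro _ ⟨r, ⟨hd, hr⟩, rfl⟩
  refine ⟨?_, hd⟩
  have hrx : |(r : ℝ)| ≤ |x| + B := by
    have := abs_sub_abs_le_abs_sub (r : ℝ) x
    rw [abs_sub_comm] at this
    linarith
  have hnum : |(r.num : ℝ)| ≤ (|x| + B) * D := by
    have : (r.num : ℝ) = r * r.den := by exact_mod_cast (Rat.mul_den_eq_num r).symm
    rw [this, abs_mul, Nat.abs_cast]
    exact mul_le_mul hrx (by exact_mod_cast hd) (by positivity) ((abs_nonneg _).trans hrx)
  rw [Set.mem_Icc, ← abs_le]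
  exact_mod_cast hnum.trans (Int.le_ceil _)

lemma Set.Infinite.exists_den_gt {x : ℝ} {S : Set ℚ} (hS : S.Infinite)
    (hSx : ∀ r ∈ S, |x - r| ≤ 1) (D : ℕ) : ∃ r ∈ S, D < r.den := by
  by_contra! h
  exact hS ((finite_setOf_den_le_abs_sub_le x 1 D).subset fun r hr => ⟨h r hr, hSx r hr⟩)

section UnitInterval

variable {x : ℝ} (hx : x ∈ Ico 0 1) (hirr : Irrational x)
include hx hirr

lemma exists_intFractPair_stream_eq (n : ℕ) :
    ∃ b, IntFractPair.stream x n = some ⟨b, gaussMap^[n] x⟩ := by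
  induction n with
  | zero =>
    refine ⟨⌊x⌋, ?_⟩
    rw [IntFractPair.stream_zero, IntFractPair.of, Int.fract_eq_self.2 hx]
    rfl
  | succ n ih =>
    obtain ⟨b, hb⟩ := ih
    refine ⟨⌊(gaussMap^[n] x)⁻¹⌋, ?_⟩
    rw [IntFractPair.stream_succ_of_some hb (hirr.gaussMap_iterate n).ne_zero,
      Function.iterate_succ_apply', gaussMap_eq_fract_inv]
    rfl

lemma of_s_get?_eq_cfOmega (n : ℕ) :
    (GenContFract.of x).s.get? n = some ⟨1, cfOmega x n⟩ := by
  obtain ⟨b, hb⟩ := exists_intFractPair_stream_eq hx hirr n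
  rw [get?_of_eq_some_of_get?_intFractPair_stream_fr_ne_zero hb (hirr.gaussMap_iterate n).ne_zero]
  have hfloor : (⌊(gaussMap^[n] x)⁻¹⌋.toNat : ℝ) = ⌊(gaussMap^[n] x)⁻¹⌋ := by
    exact_mod_cast Int.toNat_of_nonneg
      (Int.floor_nonneg.2 (inv_nonneg.2 (gaussMap_iterate_nonneg hx.1 n)))
  simp [IntFractPair.of, cfOmega, hfloor]

lemma one_le_cfOmega (n : ℕ) : 1 ≤ cfOmega x n := by
  have : (1 : ℝ) ≤ cfOmega x n :=
    of_one_le_get?_partDen (partDen_eq_s_b (of_s_get?_eq_cfOmega hx hirr n))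
  exact_mod_cast this

lemma of_conts_eq_cfP_cfQ (n : ℕ) : (GenContFract.of x).conts n = ⟨cfP x n, cfQ x n⟩ := by
  suffices h : ∀ n, (GenContFract.of x).contsAux n = ⟨(cfPPair x n).1, (cfQPair x n).1⟩ ∧
      (GenContFract.of x).contsAux (n + 1) = ⟨cfP x n, cfQ x n⟩ from (h n).2
  intro n
  induction n with
  | zero =>
    rw [zeroth_contAux_eq_one_zero, first_contAux_eq_h_one, of_h_eq_floor,
      Int.floor_eq_zero_iff.2 hx]
    simp [cfP, cfQ, cfPPair, cfQPair]
  | succ n ih =>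
    refine ⟨ih.2, ?_⟩
    rw [contsAux_recurrence (of_s_get?_eq_cfOmega hx hirr n) ih.1 ih.2]
    simp [cfP, cfQ, cfPPair, cfQPair]

lemma of_dens_eq_cfQ (n : ℕ) : (GenContFract.of x).dens n = cfQ x n := by
  rw [den_eq_conts_b, of_conts_eq_cfP_cfQ hx hirr]

lemma convergent_eq_cfP_div_cfQ (n : ℕ) : x.convergent n = (cfP x n : ℚ) / cfQ x n := by
  have h := Real.convs_eq_convergent x n
  rw [conv_eq_conts_a_div_conts_b, of_conts_eq_cfP_cfQ hx hirr] at h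
  have h' : ((x.convergent n : ℚ) : ℝ) = ((cfP x n / cfQ x n : ℚ) : ℝ) := by
    rw [← h]; push_cast; rfl
  exact_mod_cast h'

lemma den_convergent_eq_cfQ (n : ℕ) : (x.convergent n).den = cfQ x n := by
  have hq : (0 : ℤ) < cfQ x n := by exact_mod_cast cfQ_pos (one_le_cfOmega hx hirr) n
  have := Rat.den_div_eq_of_coprime (a := cfP x n) hq (by simpa using coprime_cfP_cfQ x n)
  rw [convergent_eq_cfP_div_cfQ hx hirr, ← Int.cast_natCast (cfP x n),
    ← Int.cast_natCast (cfQ x n)]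
  exact Int.ofNat.inj this

lemma abs_sub_convergent_le_one_div_cfQ_mul (n : ℕ) :
    |x - x.convergent n| ≤ 1 / ((cfQ x n : ℝ) * cfQ x (n + 1)) := by
  have hnt : ¬(GenContFract.of x).TerminatedAt n := by
    simp [terminatedAt_iff_s_none, of_s_get?_eq_cfOmega hx hirr n]
  have := abs_sub_convs_le hnt
  rwa [Real.convs_eq_convergent, of_dens_eq_cfQ hx hirr, of_dens_eq_cfQ hx hirr] at this

lemma abs_convergent_sub_convergent_succ (n : ℕ) :
    |(x.convergent n : ℝ) - x.convergent (n + 1)| = 1 / ((cfQ x n : ℝ) * cfQ x (n + 1)) := by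
  have hω := one_le_cfOmega hx hirr
  have hq : (0 : ℝ) < cfQ x n := by exact_mod_cast cfQ_pos hω n
  have hq' : (0 : ℝ) < cfQ x (n + 1) := by exact_mod_cast cfQ_pos hω (n + 1)
  have hdet : (cfP x n : ℝ) * cfQ x (n + 1) - cfQ x n * cfP x (n + 1) = (-1) ^ (n + 1) := by
    have h : ((cfP x n * cfQ x (n + 1) - cfP x (n + 1) * cfQ x n : ℤ) : ℝ) = (-1) ^ (n + 1) :=
      mod_cast cfP_mul_cfQ_succ_sub x n
    push_cast at h
    linear_combination h
  rw [convergent_eq_cfP_div_cfQ hx hirr, convergent_eq_cfP_div_cfQ hx hirr]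
  push_cast
  rw [div_sub_div _ _ hq.ne' hq'.ne', hdet, abs_div, abs_neg_one_pow,
    abs_of_pos (mul_pos hq hq')]

lemma abs_sub_convergent_le (n : ℕ) :
    |x - x.convergent n| ≤ 2 / ((1 + cfOmega x n) * (cfQ x n : ℝ) ^ 2) := by
  have hω := one_le_cfOmega hx hirr
  have hq : (0 : ℝ) < cfQ x n := by exact_mod_cast cfQ_pos hω n
  have hωn : (1 : ℝ) ≤ cfOmega x n := by exact_mod_cast hω n
  have hstep : (cfOmega x n : ℝ) * cfQ x n ≤ cfQ x (n + 1) := by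
    exact_mod_cast cfOmega_mul_cfQ_le n
  calc |x - x.convergent n| ≤ 1 / ((cfQ x n : ℝ) * cfQ x (n + 1)) :=
        abs_sub_convergent_le_one_div_cfQ_mul hx hirr n
    _ ≤ 1 / ((cfOmega x n : ℝ) * (cfQ x n : ℝ) ^ 2) :=
        one_div_le_one_div_of_le (by positivity) (by nlinarith)
    _ ≤ 2 / ((1 + cfOmega x n) * (cfQ x n : ℝ) ^ 2) := by
        rw [div_le_div_iff₀ (by positivity) (by positivity)]
        nlinarith [sq_nonneg (cfQ x n : ℝ)]

lemma le_abs_sub_convergent (n : ℕ) :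
    1 / (2 * (1 + cfOmega x n) * (cfQ x n : ℝ) ^ 2) ≤ |x - x.convergent n| := by
  have hω := one_le_cfOmega hx hirr
  have hq : (0 : ℝ) < cfQ x n := by exact_mod_cast cfQ_pos hω n
  have hq' : (0 : ℝ) < cfQ x (n + 1) := by exact_mod_cast cfQ_pos hω (n + 1)
  have hsucc : (cfQ x (n + 1) : ℝ) ≤ (1 + cfOmega x n) * cfQ x n := by
    exact_mod_cast cfQ_succ_le hω n
  have htwo : 2 * (cfQ x n : ℝ) ≤ cfQ x (n + 2) := by
    have := cfQ_add_cfQ_succ_le hω n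
    have := cfQ_le_cfQ_succ hω n
    exact_mod_cast (by omega : 2 * cfQ x n ≤ cfQ x (n + 2))
  -- Consecutive convergents are 1/(q_n q_{n+1}) apart, and the next one is at most half that
  -- far from x because q_{n+2} ≥ 2 q_n.
  have hnext := abs_sub_convergent_le_one_div_cfQ_mul hx hirr (n + 1)
  have htri := abs_sub_le (x.convergent n : ℝ) x (x.convergent (n + 1))
  rw [abs_convergent_sub_convergent_succ hx hirr, abs_sub_comm] at htri
  calc 1 / (2 * (1 + cfOmega x n) * (cfQ x n : ℝ) ^ 2)
      ≤ 1 / (2 * (cfQ x n * cfQ x (n + 1))) :=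
        one_div_le_one_div_of_le (by positivity) (by nlinarith)
    _ = 1 / ((cfQ x n : ℝ) * cfQ x (n + 1)) - 1 / (cfQ x (n + 1) * (2 * cfQ x n)) := by
        field_simp
        ring
    _ ≤ 1 / ((cfQ x n : ℝ) * cfQ x (n + 1)) - 1 / (cfQ x (n + 1) * cfQ x (n + 2)) := by
        gcongr
    _ ≤ |x - x.convergent n| := by linarith

lemma exists_den_eq_cfQ_of_abs_sub_le {c : ℝ} {r : ℚ}
    (hr : |x - r| ≤ (r.den : ℝ) ^ (-(2 + c))) (hden : 2 < (r.den : ℝ) ^ c) :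
    ∃ n, r.den = cfQ x n ∧ (cfQ x n : ℝ) ^ c ≤ 2 * (1 + cfOmega x n) := by
  have hd : (0 : ℝ) < r.den := by exact_mod_cast r.pos
  rw [rpow_neg_two_add hd] at hr
  have hlegendre : |x - r| < 1 / (2 * (r.den : ℝ) ^ 2) := by
    refine hr.trans_lt ?_
    rw [one_div]
    exact inv_strictAnti₀ (by positivity) (by nlinarith [pow_pos hd 2])
  obtain ⟨n, rfl⟩ := Real.exists_rat_eq_convergent hlegendre
  refine ⟨n, den_convergent_eq_cfQ hx hirr n, ?_⟩
  rw [den_convergent_eq_cfQ hx hirr] at hr hd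
  have hlow := (le_abs_sub_convergent hx hirr n).trans hr
  rw [one_div, inv_le_inv₀ (by positivity) (by positivity)] at hlow
  nlinarith [pow_pos hd 2]

lemma abs_sub_convergent_le_mul_rpow {a b ε : ℝ} (hε : 0 < ε) {n : ℕ}
    (h : (cfQ x n : ℝ) ^ (a + b) ≤ 1 + cfOmega x n) (hbig : 2 / ε ≤ (cfQ x n : ℝ) ^ a) :
    |x - x.convergent n| ≤ ε * (cfQ x n : ℝ) ^ (-(2 + b)) := by
  have hq : (0 : ℝ) < cfQ x n := by exact_mod_cast cfQ_pos (one_le_cfOmega hx hirr) n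
  have ha : 0 < (cfQ x n : ℝ) ^ a := Real.rpow_pos_of_pos hq a
  have hb : 0 < (cfQ x n : ℝ) ^ b := Real.rpow_pos_of_pos hq b
  rw [Real.rpow_add hq] at h
  rw [div_le_iff₀ hε] at hbig
  rw [rpow_neg_two_add hq, ← div_eq_mul_inv]
  calc |x - x.convergent n| ≤ 2 / ((1 + cfOmega x n) * (cfQ x n : ℝ) ^ 2) :=
        abs_sub_convergent_le hx hirr n
    _ ≤ 2 / ((cfQ x n : ℝ) ^ a * (cfQ x n : ℝ) ^ b * (cfQ x n : ℝ) ^ 2) := by gcongr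
    _ ≤ ε / ((cfQ x n : ℝ) ^ 2 * (cfQ x n : ℝ) ^ b) := by
        rw [div_le_div_iff₀ (by positivity) (by positivity)]
        nlinarith [mul_pos (pow_pos hq 2) hb]

theorem infinite_setOf_mul_sum_log_le {c : ℝ} (hc : 0 < c)
    (hS : {r : ℚ | |x - r| ≤ (r.den : ℝ) ^ (-(2 + c))}.Infinite) :
    {n : ℕ | c / (c + 6) * ∑ j ∈ Finset.range n, Real.log (1 + (cfOmega x j : ℝ))
      ≤ Real.log (1 + cfOmega x n)}.Infinite := by
  have hω := one_le_cfOmega hx hirr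
  refine Set.infinite_of_forall_exists_gt fun M => ?_
  obtain ⟨D₀, hD₀⟩ := eventually_atTop.1
    (((tendsto_rpow_atTop hc).comp tendsto_natCast_atTop_atTop).eventually_gt_atTop 2)
  have hSx : ∀ r ∈ {r : ℚ | |x - r| ≤ (r.den : ℝ) ^ (-(2 + c))}, |x - r| ≤ 1 :=
    fun r hr => hr.trans <|
      Real.rpow_le_one_of_one_le_of_nonpos (by exact_mod_cast r.pos) (by linarith)
  obtain ⟨r, hr, hden⟩ := hS.exists_den_gt hSx (max D₀ (cfQ x M))
  obtain ⟨n, hrn, hn⟩ := exists_den_eq_cfQ_of_abs_sub_le hx hirr hr (hD₀ _ (by omega))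
  refine ⟨n, mul_sum_log_le_of_cfQ_rpow_le hω hc.le hn, ?_⟩
  by_contra! hnM
  have := monotone_cfQ hω hnM
  omega

theorem infinite_setOf_abs_sub_le {c : ℝ} (hc : 0 < c)
    (hT : {n : ℕ | c * ∑ j ∈ Finset.range n, Real.log (1 + (cfOmega x j : ℝ))
      ≤ Real.log (1 + cfOmega x n)}.Infinite) {ε : ℝ} (hε : 0 < ε) :
    {r : ℚ | |x - r| ≤ ε * (r.den : ℝ) ^ (-(2 + c / 2))}.Infinite := by
  have hω := one_le_cfOmega hx hirr
  refine Set.Infinite.of_image Rat.den (Set.infinite_of_forall_exists_gt fun D => ?_)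
  have hq : Tendsto (fun n => (cfQ x n : ℝ)) atTop atTop :=
    tendsto_natCast_atTop_atTop.comp (tendsto_atTop_mono (le_cfQ hω) tendsto_id)
  obtain ⟨n, hnT, hnD, hnε⟩ := ((Nat.frequently_atTop_iff_infinite.2 hT).and_eventually
    ((hq.eventually_gt_atTop D).and
      (((tendsto_rpow_atTop (half_pos hc)).comp hq).eventually_ge_atTop (2 / ε)))).exists
  refine ⟨_, ⟨x.convergent n, ?_, rfl⟩, ?_⟩
  · have hqc := cfQ_rpow_le_of_mul_sum_log_le hω hc.le hnT
    rw [← add_halves c] at hqc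
    have := abs_sub_convergent_le_mul_rpow hx hirr hε hqc hnε
    rwa [← den_convergent_eq_cfQ hx hirr] at this
  · rw [den_convergent_eq_cfQ hx hirr]
    exact_mod_cast hnD

end UnitInterval

theorem stmt5 (x : ℝ) (hx : x ∈ Icc (0:ℝ) 1) (hirr : Irrational x) :
    (∃ c : ℝ, 0 < c ∧ ∀ ε : ℝ, 0 < ε →
        {r : ℚ | |x - (r : ℝ)| ≤ ε * (r.den : ℝ) ^ (-(2 + c))}.Infinite) ↔
      (∃ c : ℝ, 0 < c ∧
        {n : ℕ | c * ∑ j ∈ Finset.range n, Real.log (1 + (cfOmega x j : ℝ))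
          ≤ Real.log (1 + (cfOmega x n : ℝ))}.Infinite) := by
  have hx' : x ∈ Ico 0 1 := ⟨hx.1, lt_of_le_of_ne hx.2 hirr.ne_one⟩
  constructor
  · rintro ⟨c, hc, H⟩
    exact ⟨c / (c + 6), by positivity,
      infinite_setOf_mul_sum_log_le hx' hirr hc (by simpa using H 1 one_pos)⟩
  · rintro ⟨c, hc, hT⟩
    exact ⟨c / 2, by positivity, fun ε hε => infinite_setOf_abs_sub_le hx' hirr hc hT hε⟩
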